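/- Let L ≥ 1, l ∈ ℕ, and let a, c ∈ {0,1}^{2L}. Then the concatenated string a ++ (1) ++ c^R (the bits of a, followed by a single 1, followed by the reverse of c) lies in Ξ_l^{4L+1} if and only if c ++ (1) ++ a^R lies in Ξ_l^{4L+1}. -/

import Mathlib

/-!
Realize `C₂ * C₂` as `DihedralGroup 0`, with `p = sr 0` and `q = sr 1`. Every element is `r j` or
`sr j` for an integer `j`, and the four reduced words making up `Ξ_l` are exactly the elements with
`|j| = l`. Since `r j⁻¹ = r (-j)` and `sr j⁻¹ = sr j`, this condition is invariant under inversion.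
Reversing a string of odd length keeps the parity of every position, so it reverses the word
`w(x)` while keeping its letters, which are involutions: `w(xᴿ) = w(x)⁻¹`. Finally
`(a ++ (1) ++ cᴿ)ᴿ = c ++ (1) ++ aᴿ`.
-/

/-- The generator `p` of the infinite dihedral group `C₂ * C₂`, realized as the
reflection `sr 0` in `DihedralGroup 0`. -/
def pgen : DihedralGroup 0 := DihedralGroup.sr 0

/-- The generator `q` of the infinite dihedral group `C₂ * C₂`, realized as the
reflection `sr 1` in `DihedralGroup 0`. -/
def qgen : DihedralGroup 0 := DihedralGroup.sr 1

/-- `g^b` for a bit `b`: `g⁰ = 1`, `g¹ = g`. -/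
def bpow (g : DihedralGroup 0) (b : Bool) : DihedralGroup 0 := if b then g else 1

/-- The generator at (0-based) index `i`, i.e. at 1-based position `i+1`:
`q` at odd positions, `p` at even positions. -/
def genAt (i : ℕ) : DihedralGroup 0 := if i % 2 = 0 then qgen else pgen

/-- The word `w(x) = r_n^{x_n} ⋯ r_2^{x_2} r_1^{x_1}` associated with a bit string
`x = x₁…x_n`, where `r_i = q` if `i` is odd and `r_i = p` if `i` is even. -/
def wword {n : ℕ} (x : Fin n → Bool) : DihedralGroup 0 :=
  ((List.finRange n).reverse.map (fun i => bpow (genAt i.val) (x i))).prod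

/-- The reduced word `t(u,k,v) = p^u (qp)^k q^v`. -/
def tword (u : Bool) (k : ℕ) (v : Bool) : DihedralGroup 0 :=
  bpow pgen u * (qgen * pgen) ^ k * bpow qgen v

/-- `Θⁿ_{ukv}` : the set of bit strings `x` of length `n` with `w(x) = p^u (qp)^k q^v`,
empty by convention when `k < 0`. -/
def Theta (n : ℕ) (u : Bool) (k : ℤ) (v : Bool) : Finset (Fin n → Bool) :=
  if k < 0 then ∅ else Finset.univ.filter (fun x => wword x = tword u k.toNat v)

/-- `Ξ_l^α = Θ^α_{0,l,0} ∪ Θ^α_{1,l,0} ∪ Θ^α_{0,l−1,1} ∪ Θ^α_{1,l−1,1}`. -/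
def Xi (α l : ℕ) : Finset (Fin α → Bool) :=
  Theta α false l false ∪ Theta α true l false ∪
    Theta α false ((l : ℤ) - 1) true ∪ Theta α true ((l : ℤ) - 1) true

/-- The concatenated bit string `a ++ (1) ++ cᴿ` of length `4L+1`: the bits of `a`,
followed by a single `1`, followed by the reverse of `c`. -/
def concat3 (L : ℕ) (a c : Fin (2 * L) → Bool) : Fin (4 * L + 1) → Bool :=
  fun i =>
    if h : (i : ℕ) < 2 * L then a ⟨i, h⟩
    else if h2 : (i : ℕ) = 2 * L then true
    else c ⟨4 * L - (i : ℕ), by have := i.isLt; omega⟩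

lemma ZMod.val_eq_iff_eq_or_eq_neg (a : ZMod 0) (l : ℕ) : a.val = l ↔ a = l ∨ a = -l := by
  revert a
  -- `ZMod 0` is `ℤ`, and `ZMod.val` on it is `Int.natAbs`.
  change ∀ a : ℤ, a.natAbs = l ↔ a = l ∨ a = -l
  omega

namespace DihedralGroup

def coord {n : ℕ} : DihedralGroup n → ZMod n
  | r i => i
  | sr i => i

@[simp] lemma coord_r {n : ℕ} (i : ZMod n) : coord (r i) = i := rfl
@[simp] lemma coord_sr {n : ℕ} (i : ZMod n) : coord (sr i) = i := rfl

lemma val_coord_inv (g : DihedralGroup 0) : (coord g⁻¹).val = (coord g).val := by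
  cases g <;> simp [ZMod.val_neg']

end DihedralGroup

open DihedralGroup

lemma genAt_inv (i : ℕ) : (genAt i)⁻¹ = genAt i := by
  unfold genAt pgen qgen; split_ifs <;> rfl

lemma genAt_of_mod_two_eq {i j : ℕ} (h : i % 2 = j % 2) : genAt i = genAt j := by
  rw [genAt, genAt, h]

lemma bpow_inv (g : DihedralGroup 0) (b : Bool) : (bpow g b)⁻¹ = bpow g⁻¹ b := by
  cases b <;> simp [bpow]

lemma wword_comp_rev {n : ℕ} (hn : Odd n) (x : Fin n → Bool) :
    wword (x ∘ Fin.rev) = (wword x)⁻¹ := by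
  obtain ⟨m, rfl⟩ := hn
  unfold wword
  rw [List.prod_inv_reverse, ← List.map_reverse, ← List.map_reverse,
    List.reverse_reverse, List.finRange_reverse, List.map_map, List.map_map]
  refine congrArg _ (List.map_congr_left fun j _ => ?_)
  have hj := j.isLt
  simp only [Function.comp_apply, Fin.rev_rev, bpow_inv, genAt_inv, Fin.val_rev]
  rw [genAt_of_mod_two_eq (j := j) (by omega)]

lemma concat3_swap (L : ℕ) (a c : Fin (2 * L) → Bool) :
    concat3 L c a = concat3 L a c ∘ Fin.rev := by
  funext i
  have hi := i.isLt
  simp only [concat3, Function.comp_apply, Fin.val_rev]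
  split_ifs <;> first | rfl | omega | (congr 1; ext; simp only; omega)

lemma qgen_mul_pgen_pow (k : ℕ) : (qgen * pgen) ^ k = r (-(k : ZMod 0)) := by
  induction k with
  | zero => rfl
  | succ k ih =>
    rw [pow_succ, ih, qgen, pgen, sr_mul_sr, r_mul_r]
    push_cast; ring_nf

lemma tword_false_false (k : ℕ) : tword false k false = r (-(k : ZMod 0)) := by
  rw [tword, qgen_mul_pgen_pow]
  simp [bpow]

lemma tword_true_false (k : ℕ) : tword true k false = sr (-(k : ZMod 0)) := by
  rw [tword, qgen_mul_pgen_pow]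
  simp [bpow, pgen, sr_mul_r]

lemma tword_false_true (k : ℕ) : tword false k true = sr ((k : ZMod 0) + 1) := by
  rw [tword, qgen_mul_pgen_pow]
  simp [bpow, qgen, r_mul_sr, add_comm]

lemma tword_true_true (k : ℕ) : tword true k true = r ((k : ZMod 0) + 1) := by
  rw [tword, qgen_mul_pgen_pow]
  simp [bpow, pgen, qgen, sr_mul_r, sr_mul_sr, add_comm]

lemma mem_Theta {n : ℕ} {u v : Bool} {k : ℤ} {x : Fin n → Bool} :
    x ∈ Theta n u k v ↔ 0 ≤ k ∧ wword x = tword u k.toNat v := by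
  unfold Theta
  split_ifs with hk
  · simp only [Finset.notMem_empty, false_iff]; omega
  · simp only [Finset.mem_filter, Finset.mem_univ, not_lt.mp hk, true_and]

lemma mem_Xi {α l : ℕ} {x : Fin α → Bool} :
    x ∈ Xi α l ↔ (coord (wword x)).val = l := by
  simp only [Xi, Finset.mem_union, mem_Theta]
  generalize wword x = g
  rcases l with _ | l
  · cases g <;> simp [-r_zero, tword_false_false, tword_true_false]
  · have hl : (0 : ℤ) ≤ l + 1 := by omega
    cases g <;> simp [hl, or_comm, tword_false_false, tword_true_false, tword_false_true,
      tword_true_true, ZMod.val_eq_iff_eq_or_eq_neg]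

theorem statement16_general (L : ℕ) (l : ℕ) (a c : Fin (2 * L) → Bool) :
    concat3 L a c ∈ Xi (4 * L + 1) l ↔ concat3 L c a ∈ Xi (4 * L + 1) l := by
  rw [mem_Xi, mem_Xi, concat3_swap, wword_comp_rev ⟨2 * L, by ring⟩, val_coord_inv]

/-- closure under reversal: `a ++ (1) ++ cᴿ ∈ Ξ_l^{4L+1}` iff
`c ++ (1) ++ aᴿ ∈ Ξ_l^{4L+1}`. -/
theorem statement16 (L : ℕ) (hL : 1 ≤ L) (l : ℕ) (a c : Fin (2 * L) → Bool) :
    concat3 L a c ∈ Xi (4 * L + 1) l ↔ concat3 L c a ∈ Xi (4 * L + 1) l :=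
  statement16_general L l a c
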